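/- arXiv:2602.05873 — 3 statements merged into one kernel-verified Lean document; each statement's English description precedes it below -/
import Mathlib

section
/- Let d be a positive natural number and let p, q : ℝ^d → ℝ be two probability density functions that are strictly positive everywhere, continuously differentiable, Lebesgue-integrable with ∫ p(θ) dθ = 1 and ∫ q(θ) dθ = 1. If for every θ ∈ ℝ^d the gradient of log p at θ equals the gradient of log q at θ (i.e., the two distributions have identical scores everywhere), then p = q. -/
/-!
Equal scores mean that `log p - log q` has zero derivative on the connected space `ℝ^d`, so
`p = c * q` for a constant `c`; integrating, the normalization of both densities forces `c = 1`.
-/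

open MeasureTheory

theorem fderiv_eq_of_gradient_eq {F : Type*} [NormedAddCommGroup F] [InnerProductSpace ℝ F]
    [CompleteSpace F] {f g : F → ℝ} {x : F} (h : gradient f x = gradient g x) :
    fderiv ℝ f x = fderiv ℝ g x :=
  (InnerProductSpace.toDual ℝ F).symm.injective h

theorem exists_eq_const_mul_of_fderiv_log_eq {E : Type*} [NormedAddCommGroup E]
    [NormedSpace ℝ E] {f g : E → ℝ} (hf : Differentiable ℝ f) (hg : Differentiable ℝ g)
    (hf_pos : ∀ x, 0 < f x) (hg_pos : ∀ x, 0 < g x)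
    (h : ∀ x, fderiv ℝ (fun y => Real.log (f y)) x = fderiv ℝ (fun y => Real.log (g y)) x) :
    ∃ c, ∀ x, f x = c * g x := by
  obtain ⟨a, ha⟩ := isOpen_univ.exists_eq_add_of_fderiv_eq isPreconnected_univ
    (hf.log fun x => (hf_pos x).ne').differentiableOn
    (hg.log fun x => (hg_pos x).ne').differentiableOn fun x _ => h x
  refine ⟨Real.exp a, fun x => ?_⟩
  have hlog : Real.log (f x) = Real.log (g x) + a := ha (Set.mem_univ x)
  rw [← Real.exp_log (hf_pos x), hlog, Real.exp_add, Real.exp_log (hg_pos x), mul_comm]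

theorem eq_of_eq_const_mul_of_integral_eq_one {α : Type*} [MeasurableSpace α] {μ : Measure α}
    {f g : α → ℝ} {c : ℝ} (hfg : ∀ x, f x = c * g x) (hf : ∫ x, f x ∂μ = 1)
    (hg : ∫ x, g x ∂μ = 1) : f = g := by
  have hc : c = 1 := by
    rw [← hf, funext hfg, integral_const_mul, hg, mul_one]
  funext x
  rw [hfg x, hc, one_mul]

theorem score_matching_implies_distribution_matching_general
    (d : ℕ)
    (p q : EuclideanSpace ℝ (Fin d) → ℝ)
    (hp_pos : ∀ θ, 0 < p θ) (hq_pos : ∀ θ, 0 < q θ)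
    (hp_smooth : ContDiff ℝ 1 p) (hq_smooth : ContDiff ℝ 1 q)
    (hp_one : ∫ θ, p θ = 1) (hq_one : ∫ θ, q θ = 1)
    (hscore : ∀ θ, gradient (fun x => Real.log (p x)) θ
                 = gradient (fun x => Real.log (q x)) θ) :
    p = q := by
  obtain ⟨c, hc⟩ := exists_eq_const_mul_of_fderiv_log_eq
    (hp_smooth.differentiable one_ne_zero) (hq_smooth.differentiable one_ne_zero)
    hp_pos hq_pos fun θ => fderiv_eq_of_gradient_eq (hscore θ)
  exact eq_of_eq_const_mul_of_integral_eq_one hc hp_one hq_one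

/-- Score matching implies distribution matching (Lemma 1): two strictly positive,
continuously differentiable probability densities on `ℝ^d` with identical scores
(gradients of their logs) everywhere are equal. -/
theorem score_matching_implies_distribution_matching
    (d : ℕ) (hd : 0 < d)
    (p q : EuclideanSpace ℝ (Fin d) → ℝ)
    (hp_pos : ∀ θ, 0 < p θ) (hq_pos : ∀ θ, 0 < q θ)
    (hp_smooth : ContDiff ℝ 1 p) (hq_smooth : ContDiff ℝ 1 q)
    (hp_int : Integrable p) (hq_int : Integrable q)
    (hp_one : ∫ θ, p θ = 1) (hq_one : ∫ θ, q θ = 1)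
    (hscore : ∀ θ, gradient (fun x => Real.log (p x)) θ
                 = gradient (fun x => Real.log (q x)) θ) :
    p = q :=
  score_matching_implies_distribution_matching_general d p q hp_pos hq_pos hp_smooth hq_smooth
    hp_one hq_one hscore
end

section
/- Let d be a positive natural number, let Σ and V be symmetric positive-definite d×d real matrices, let μ, m ∈ ℝ^d, and let β ∈ [0,1]. Then the matrix A := β·V⁻¹ + (1-β)·Σ⁻¹ is symmetric positive definite (hence invertible), and, setting V' := A⁻¹ and m' := V'·(β·V⁻¹·m + (1-β)·Σ⁻¹·μ), for every θ ∈ ℝ^d one has -(V')⁻¹·(θ - m') = β·(-V⁻¹·(θ - m)) + (1-β)·(-Σ⁻¹·(θ - μ)). Consequently the score of the Gaussian N(m', V') is the β-convex combination of the scores of the Gaussians N(m, V) and N(μ, Σ) at every point. -/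
/-! Each score `-P(θ - m) = -Pθ + Pm` is affine in `θ` with linear part minus the precision `P`,
so a convex combination of two scores is affine with linear part `-A`, where `A` is the same
convex combination of the precisions. Positive-definite matrices form a convex cone, so `A` is
again a precision, and `m'` is the point where the combined score vanishes. -/

namespace Matrix

open scoped ComplexOrder

theorem PosDef.smul_add_smul {𝕜 n : Type*} [RCLike 𝕜] {M N : Matrix n n 𝕜}
    (hM : M.PosDef) (hN : N.PosDef) {a b : ℝ} (ha : 0 ≤ a) (hb : 0 ≤ b) (hab : 0 < a + b) :
    (a • M + b • N).PosDef := by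
  rcases ha.lt_or_eq with ha | rfl
  · exact (hM.smul ha).add_posSemidef (hN.posSemidef.smul hb)
  · exact PosDef.posSemidef_add (hM.posSemidef.smul le_rfl) (hN.smul (by simpa using hab))

theorem inv_inv_mulVec_sub_inv_mulVec {R n : Type*} [CommRing R] [Fintype n] [DecidableEq n]
    {A : Matrix n n R} (hA : IsUnit A) (θ b : n → R) :
    A⁻¹⁻¹ *ᵥ (θ - A⁻¹ *ᵥ b) = A *ᵥ θ - b := by
  have hdet := (isUnit_iff_isUnit_det A).mp hA
  rw [nonsing_inv_nonsing_inv A hdet, mulVec_sub, mulVec_mulVec, mul_nonsing_inv A hdet,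
    one_mulVec]

end Matrix

theorem gaussian_family_score_convex_combination_general
    (d : ℕ)
    (S V : Matrix (Fin d) (Fin d) ℝ) (hS : S.PosDef) (hV : V.PosDef)
    (μ m : Fin d → ℝ) (β : ℝ) (hβ0 : 0 ≤ β) (hβ1 : β ≤ 1)
    (A : Matrix (Fin d) (Fin d) ℝ) (hA : A = β • V⁻¹ + (1 - β) • S⁻¹)
    (V' : Matrix (Fin d) (Fin d) ℝ) (hV' : V' = A⁻¹)
    (m' : Fin d → ℝ) (hm' : m' = V'.mulVec (β • V⁻¹.mulVec m + (1 - β) • S⁻¹.mulVec μ)) :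
    A.PosDef ∧
      ∀ θ : Fin d → ℝ,
        -(V'⁻¹.mulVec (θ - m'))
          = β • (-(V⁻¹.mulVec (θ - m))) + (1 - β) • (-(S⁻¹.mulVec (θ - μ))) := by
  have hApos : A.PosDef :=
    hA ▸ hV.inv.smul_add_smul hS.inv hβ0 (sub_nonneg.2 hβ1) (by norm_num)
  refine ⟨hApos, fun θ => ?_⟩
  rw [hm', hV', Matrix.inv_inv_mulVec_sub_inv_mulVec hApos.isUnit, hA, Matrix.add_mulVec,
    Matrix.smul_mulVec, Matrix.smul_mulVec, Matrix.mulVec_sub, Matrix.mulVec_sub]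
  module

/-- Closedness of the Gaussian family under convex combinations of scores:
for symmetric positive-definite `Σ` (here `S`) and `V`, means `μ`, `m` and `β ∈ [0,1]`,
the matrix `A = β·V⁻¹ + (1-β)·Σ⁻¹` is symmetric positive definite, and with
`V' = A⁻¹`, `m' = V'·(β·V⁻¹·m + (1-β)·Σ⁻¹·μ)`, the score `-(V')⁻¹(θ - m')` of
`N(m', V')` equals `β·(-V⁻¹(θ - m)) + (1-β)·(-Σ⁻¹(θ - μ))` at every `θ`. -/
theorem gaussian_family_score_convex_combination
    (d : ℕ) (hd : 0 < d)
    (S V : Matrix (Fin d) (Fin d) ℝ) (hS : S.PosDef) (hV : V.PosDef)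
    (μ m : Fin d → ℝ) (β : ℝ) (hβ0 : 0 ≤ β) (hβ1 : β ≤ 1)
    (A : Matrix (Fin d) (Fin d) ℝ) (hA : A = β • V⁻¹ + (1 - β) • S⁻¹)
    (V' : Matrix (Fin d) (Fin d) ℝ) (hV' : V' = A⁻¹)
    (m' : Fin d → ℝ) (hm' : m' = V'.mulVec (β • V⁻¹.mulVec m + (1 - β) • S⁻¹.mulVec μ)) :
    A.PosDef ∧
      ∀ θ : Fin d → ℝ,
        -(V'⁻¹.mulVec (θ - m'))
          = β • (-(V⁻¹.mulVec (θ - m))) + (1 - β) • (-(S⁻¹.mulVec (θ - μ))) :=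
  gaussian_family_score_convex_combination_general d S V hS hV μ m β hβ0 hβ1 A hA V' hV' m' hm'
end

section
/- Let (Θ, 𝒜, μ) be a measure space, let d be a positive natural number, let w : Θ → ℝ be a nonnegative measurable function, let α ≥ 0 be a real number, and let a, b : Θ → ℝ^d be measurable functions. Define v* : Θ → ℝ^d by v*(θ) := (1/(1+α)) • (α • a(θ) + b(θ)). Then for every measurable function v : Θ → ℝ^d, the lower Lebesgue integral ∫⁻ w(θ)·(α·‖v*(θ) - a(θ)‖² + ‖v*(θ) - b(θ)‖²) dμ(θ) is less than or equal to ∫⁻ w(θ)·(α·‖v(θ) - a(θ)‖² + ‖v(θ) - b(θ)‖²) dμ(θ). -/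
/-!
The objective is minimized pointwise, so monotonicity of the lower integral finishes. At `v*`
one has `v* - a = (1 + α)⁻¹ • (b - a)` and `v* - b = α (1 + α)⁻¹ • (a - b)`, so the integrand
equals `α / (1 + α) * ‖a - b‖ ^ 2`. For any `v`, the triangle inequality gives
`‖a - b‖ ≤ ‖v - a‖ + ‖v - b‖`, and
`α x ^ 2 + y ^ 2 - α / (1 + α) * (x + y) ^ 2 = (α x - y) ^ 2 / (1 + α)`.
No inner product is needed, only the norm.
-/

open MeasureTheory

lemma div_one_add_mul_sq_le_of_le_add {α c x y : ℝ} (hα : 0 ≤ α) (hc : 0 ≤ c)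
    (hcxy : c ≤ x + y) : α / (1 + α) * c ^ 2 ≤ α * x ^ 2 + y ^ 2 := by
  have h1α : 0 < 1 + α := by linarith
  have hsplit : α * x ^ 2 + y ^ 2 = α / (1 + α) * (x + y) ^ 2 + (α * x - y) ^ 2 / (1 + α) := by
    field_simp
    ring
  calc α / (1 + α) * c ^ 2 ≤ α / (1 + α) * (x + y) ^ 2 := by gcongr
    _ ≤ α / (1 + α) * (x + y) ^ 2 + (α * x - y) ^ 2 / (1 + α) :=
      le_add_of_nonneg_right (by positivity)
    _ = α * x ^ 2 + y ^ 2 := hsplit.symm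

section NormedSpace

variable {E : Type*} [NormedAddCommGroup E] [NormedSpace ℝ E] {α : ℝ}

lemma weightedDistSq_average_eq (hα : 0 ≤ α) (a b : E) :
    α * ‖(1 / (1 + α)) • (α • a + b) - a‖ ^ 2 + ‖(1 / (1 + α)) • (α • a + b) - b‖ ^ 2
      = α / (1 + α) * ‖a - b‖ ^ 2 := by
  have h1α : 0 < 1 + α := by linarith
  have hva : (1 / (1 + α)) • (α • a + b) - a = (1 / (1 + α)) • (b - a) := by
    match_scalars <;> grind
  have hvb : (1 / (1 + α)) • (α • a + b) - b = (α / (1 + α)) • (a - b) := by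
    match_scalars <;> grind
  rw [hva, hvb, norm_smul, norm_smul, norm_sub_rev b a, Real.norm_of_nonneg (by positivity),
    Real.norm_of_nonneg (by positivity)]
  field_simp

lemma weightedDistSq_average_le (hα : 0 ≤ α) (a b v : E) :
    α * ‖(1 / (1 + α)) • (α • a + b) - a‖ ^ 2 + ‖(1 / (1 + α)) • (α • a + b) - b‖ ^ 2
      ≤ α * ‖v - a‖ ^ 2 + ‖v - b‖ ^ 2 := by
  have htri : ‖a - b‖ ≤ ‖v - a‖ + ‖v - b‖ := by
    simpa only [norm_sub_rev a v] using norm_sub_le_norm_sub_add_norm_sub a v b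
  rw [weightedDistSq_average_eq hα]
  exact div_one_add_mul_sq_le_of_le_add hα (norm_nonneg _) htri

end NormedSpace

theorem proximal_integral_minimizer_general
    (Θ : Type*) [MeasurableSpace Θ] (μ : Measure Θ)
    (d : ℕ)
    (w : Θ → ℝ) (hw_nonneg : ∀ θ, 0 ≤ w θ)
    (α : ℝ) (hα : 0 ≤ α)
    (a b : Θ → EuclideanSpace ℝ (Fin d))
    (vstar : Θ → EuclideanSpace ℝ (Fin d))
    (hvstar : ∀ θ, vstar θ = (1 / (1 + α)) • (α • a θ + b θ)) :
    ∀ v : Θ → EuclideanSpace ℝ (Fin d), Measurable v →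
      ∫⁻ θ, ENNReal.ofReal
          (w θ * (α * ‖vstar θ - a θ‖ ^ 2 + ‖vstar θ - b θ‖ ^ 2)) ∂μ
        ≤ ∫⁻ θ, ENNReal.ofReal
            (w θ * (α * ‖v θ - a θ‖ ^ 2 + ‖v θ - b θ‖ ^ 2)) ∂μ := by
  intro v _
  refine lintegral_mono fun θ => ENNReal.ofReal_le_ofReal ?_
  rw [hvstar θ]
  exact mul_le_mul_of_nonneg_left (weightedDistSq_average_le hα (a θ) (b θ) (v θ)) (hw_nonneg θ)

/-- Functional (integrated) minimization of the proximal score-matching objective: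
with weight `w ≥ 0`, `α ≥ 0`, and vector fields `a, b`, the pointwise weighted average
`v*(θ) = (1/(1+α)) • (α • a(θ) + b(θ))` minimizes the weighted integral objective
`∫⁻ w(θ)·(α‖v(θ) - a(θ)‖² + ‖v(θ) - b(θ)‖²) dμ` over measurable vector fields `v`. -/
theorem proximal_integral_minimizer
    (Θ : Type*) [MeasurableSpace Θ] (μ : Measure Θ)
    (d : ℕ) (hd : 0 < d)
    (w : Θ → ℝ) (hw_meas : Measurable w) (hw_nonneg : ∀ θ, 0 ≤ w θ)
    (α : ℝ) (hα : 0 ≤ α)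
    (a b : Θ → EuclideanSpace ℝ (Fin d)) (ha : Measurable a) (hb : Measurable b)
    (vstar : Θ → EuclideanSpace ℝ (Fin d))
    (hvstar : ∀ θ, vstar θ = (1 / (1 + α)) • (α • a θ + b θ)) :
    ∀ v : Θ → EuclideanSpace ℝ (Fin d), Measurable v →
      ∫⁻ θ, ENNReal.ofReal
          (w θ * (α * ‖vstar θ - a θ‖ ^ 2 + ‖vstar θ - b θ‖ ^ 2)) ∂μ
        ≤ ∫⁻ θ, ENNReal.ofReal
            (w θ * (α * ‖v θ - a θ‖ ^ 2 + ‖v θ - b θ‖ ^ 2)) ∂μ :=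
  proximal_integral_minimizer_general Θ μ d w hw_nonneg α hα a b vstar hvstar
end
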